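/- If v ∈ ℤ³ is primitive and d² divides ‖v‖², then the cubic sublattice with edge length d containing v is unique: any two subgroups of ℤ³ each admitting a basis of three pairwise orthogonal vectors of length d and each containing v are equal. -/

import Mathlib

/-!
Let `a, b, c` be pairwise orthogonal of length `d ≠ 0` and `T p = p₀a + p₁b + p₂c`.
Cramer's identity for the triple product `D = a ⬝ (b × c)` gives `D (b × c) = d⁴ a`, hence
`D = ±d³` and `b × c = ±d a` (cyclically). So `T` multiplies dot products by `d²` and cross
products by `±d`, and `d² z = T (z ⬝ a, z ⬝ b, z ⬝ c)`. Consequently a cubic lattice `Γ ∋ v` of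
edge `d` lies in `{x | d² ∣ v ⬝ x, d ∣ v × x}` and contains every `σ v + d (v × w) + d² y`.
For primitive `v` with `d² ∣ v ⬝ v`, pick `β` with `β ⬝ v = 1`; then
`x = (x ⬝ β) v + (v × x) × β` and `u = v × (u × β) + (v ⬝ u) β` show that every `x` of the first
set has the second form. Thus `Γ` is determined by `v` and `d`.
-/

/-- Dot product on `ℤ³`. -/
def dot3 (a b : Fin 3 → ℤ) : ℤ := a 0 * b 0 + a 1 * b 1 + a 2 * b 2

/-- Cross product on `ℤ³`. -/
def cross3 (a b : Fin 3 → ℤ) : Fin 3 → ℤ :=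
  ![a 1 * b 2 - a 2 * b 1, a 2 * b 0 - a 0 * b 2, a 0 * b 1 - a 1 * b 0]

/-- A vector of `ℤ³` is primitive if its coordinates are coprime. -/
def Primitive (v : Fin 3 → ℤ) : Prop := Int.gcd (Int.gcd (v 0) (v 1)) (v 2) = 1

/-- A cubic sublattice of `ℤ³` with edge length `d`: a subgroup generated by three
pairwise orthogonal vectors of length `d`. -/
def IsCubicLattice (Γ : AddSubgroup (Fin 3 → ℤ)) (d : ℕ) : Prop :=
  ∃ a b c : Fin 3 → ℤ,
    Γ = AddSubgroup.closure {a, b, c} ∧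
    dot3 a b = 0 ∧ dot3 a c = 0 ∧ dot3 b c = 0 ∧
    dot3 a a = (d : ℤ)^2 ∧ dot3 b b = (d : ℤ)^2 ∧ dot3 c c = (d : ℤ)^2

open Matrix

section Frames

variable {R : Type*} [CommRing R]

theorem triple_product_smul (a b c z : Fin 3 → R) :
    (a ⬝ᵥ b ⨯₃ c) • z = (z ⬝ᵥ b ⨯₃ c) • a + (z ⬝ᵥ c ⨯₃ a) • b + (z ⬝ᵥ a ⨯₃ b) • c := by
  simp_rw [cross_apply, vec3_dotProduct]
  ext i
  fin_cases i <;>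
  · simp only [Fin.zero_eta, Fin.mk_one, Fin.reduceFinMk, Fin.isValue, cons_val, Pi.add_apply,
      Pi.smul_apply, smul_eq_mul]
    ring

theorem vecMul_vec3 (p a b c : Fin 3 → R) : p ᵥ* ![a, b, c] = p 0 • a + p 1 • b + p 2 • c := by
  ext i
  simp [vecMul, dotProduct, Fin.sum_univ_three]

theorem vecMul_cross_vecMul {a b c : Fin 3 → R} {k : R} (hbc : b ⨯₃ c = k • a)
    (hca : c ⨯₃ a = k • b) (hab : a ⨯₃ b = k • c) (p q : Fin 3 → R) :
    (p ᵥ* ![a, b, c]) ⨯₃ (q ᵥ* ![a, b, c]) = k • ((p ⨯₃ q) ᵥ* ![a, b, c]) := by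
  have hba : b ⨯₃ a = -(k • c) := by rw [← hab, cross_anticomm]
  have hcb : c ⨯₃ b = -(k • a) := by rw [← hbc, cross_anticomm]
  have hac : a ⨯₃ c = -(k • b) := by rw [← hca, cross_anticomm]
  simp only [vecMul_vec3, map_add, map_smul, LinearMap.add_apply, LinearMap.smul_apply,
    cross_self, hab, hbc, hca, hba, hcb, hac, smul_zero, cross_apply, cons_val_zero,
    cons_val_one, cons_val]
  module

structure IsCubicFrame (a b c : Fin 3 → R) (d : R) : Prop where
  dot_ab : a ⬝ᵥ b = 0
  dot_bc : b ⬝ᵥ c = 0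
  dot_ca : c ⬝ᵥ a = 0
  dot_aa : a ⬝ᵥ a = d ^ 2
  dot_bb : b ⬝ᵥ b = d ^ 2
  dot_cc : c ⬝ᵥ c = d ^ 2

namespace IsCubicFrame

variable {a b c : Fin 3 → R} {d : R}

theorem rotate (h : IsCubicFrame a b c d) : IsCubicFrame b c a d :=
  ⟨h.dot_bc, h.dot_ca, h.dot_ab, h.dot_bb, h.dot_cc, h.dot_aa⟩

theorem vecMul_dotProduct_vecMul (h : IsCubicFrame a b c d) (p q : Fin 3 → R) :
    (p ᵥ* ![a, b, c]) ⬝ᵥ (q ᵥ* ![a, b, c]) = d ^ 2 * (p ⬝ᵥ q) := by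
  simp only [vecMul_vec3, add_dotProduct, dotProduct_add, smul_dotProduct, dotProduct_smul,
    dotProduct_comm b a, dotProduct_comm c b, dotProduct_comm a c, h.dot_ab, h.dot_bc, h.dot_ca,
    h.dot_aa, h.dot_bb, h.dot_cc, vec3_dotProduct, smul_eq_mul]
  ring

theorem triple_product_smul_cross (h : IsCubicFrame a b c d) :
    (a ⬝ᵥ b ⨯₃ c) • (b ⨯₃ c) = d ^ 4 • a := by
  rw [triple_product_smul, cross_dot_cross, cross_dot_cross, cross_dot_cross]
  simp only [dotProduct_comm c b, dotProduct_comm b a, h.dot_ab, h.dot_bc, h.dot_ca, h.dot_bb,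
    h.dot_cc]
  module

theorem triple_product_sq (h : IsCubicFrame a b c d) : (a ⬝ᵥ b ⨯₃ c) ^ 2 = (d ^ 3) ^ 2 := by
  have := congrArg (a ⬝ᵥ ·) h.triple_product_smul_cross
  simp only [dotProduct_smul, h.dot_aa, smul_eq_mul] at this
  linear_combination this

variable [IsDomain R]

theorem exists_cross_eq (h : IsCubicFrame a b c d) (hd : d ≠ 0) :
    ∃ ε : R, ε ^ 2 = 1 ∧ b ⨯₃ c = (ε * d) • a ∧ c ⨯₃ a = (ε * d) • b ∧
      a ⨯₃ b = (ε * d) • c := by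
  obtain ⟨ε, hε, hD⟩ : ∃ ε : R, ε ^ 2 = 1 ∧ a ⬝ᵥ b ⨯₃ c = ε * d ^ 3 := by
    rcases sq_eq_sq_iff_eq_or_eq_neg.1 h.triple_product_sq with hD | hD
    · exact ⟨1, one_pow 2, by rw [hD, one_mul]⟩
    · exact ⟨-1, by norm_num, by rw [hD, neg_one_mul]⟩
  have cross_eq : ∀ {a b c : Fin 3 → R}, IsCubicFrame a b c d → a ⬝ᵥ b ⨯₃ c = ε * d ^ 3 →
      b ⨯₃ c = (ε * d) • a := by
    intro a b c h hD
    have := h.triple_product_smul_cross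
    rw [hD] at this
    refine smul_right_injective _ (pow_ne_zero 3 hd) ?_
    linear_combination (norm := module) ε • this - hε • (d ^ 3 • b ⨯₃ c)
  have hD' : b ⬝ᵥ c ⨯₃ a = ε * d ^ 3 := by rw [← triple_product_permutation, hD]
  have hD'' : c ⬝ᵥ a ⨯₃ b = ε * d ^ 3 := by rw [← triple_product_permutation, hD']
  exact ⟨ε, hε, cross_eq h hD, cross_eq h.rotate hD', cross_eq h.rotate.rotate hD''⟩

theorem sq_smul_eq_sum (h : IsCubicFrame a b c d) (hd : d ≠ 0) (z : Fin 3 → R) :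
    d ^ 2 • z = (z ⬝ᵥ a) • a + (z ⬝ᵥ b) • b + (z ⬝ᵥ c) • c := by
  obtain ⟨ε, hε, hbc, hca, hab⟩ := h.exists_cross_eq hd
  have hεd : ε * d ≠ 0 := mul_ne_zero (by rintro rfl; simp at hε) hd
  refine smul_right_injective _ hεd ?_
  have := triple_product_smul a b c z
  simp only [hbc, hca, hab, dotProduct_smul, h.dot_aa, smul_eq_mul] at this
  linear_combination (norm := module) this

end IsCubicFrame

end Frames

theorem dot3_eq_dotProduct (a b : Fin 3 → ℤ) : dot3 a b = a ⬝ᵥ b :=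
  (vec3_dotProduct a b).symm

theorem Primitive.exists_dotProduct_eq_one {v : Fin 3 → ℤ} (hv : Primitive v) :
    ∃ β, β ⬝ᵥ v = 1 := by
  obtain ⟨s, t, hst⟩ := Int.isCoprime_iff_gcd_eq_one.2 hv
  have hg := Int.gcd_eq_gcd_ab (v 0) (v 1)
  refine ⟨![s * Int.gcdA (v 0) (v 1), s * Int.gcdB (v 0) (v 1), t], ?_⟩
  simp only [vec3_dotProduct, cons_val_zero, cons_val_one, cons_val_two, tail_cons, head_cons]
  linear_combination hst - s * hg

theorem mem_closure_triple_iff {a b c x : Fin 3 → ℤ} :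
    x ∈ AddSubgroup.closure {a, b, c} ↔ ∃ p, p ᵥ* ![a, b, c] = x := by
  have : ({a, b, c} : Set (Fin 3 → ℤ)) = Set.range ![a, b, c] := by
    rw [range_cons, range_cons_cons_empty, Set.singleton_union]
  rw [this, AddSubgroup.mem_closure_range_iff_of_fintype]
  simp [vecMul_vec3, Fin.sum_univ_three, eq_comm]

def cubicSublatticeThrough (v : Fin 3 → ℤ) (d : ℤ) : Set (Fin 3 → ℤ) :=
  {x | d ^ 2 ∣ v ⬝ᵥ x ∧ ∃ k, v ⨯₃ x = d • k}

theorem exists_eq_smul_add_cross_add {v x : Fin 3 → ℤ} {d : ℤ} (hv : Primitive v) (hd : d ≠ 0)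
    (hvv : d ^ 2 ∣ v ⬝ᵥ v) (hx : x ∈ cubicSublatticeThrough v d) :
    ∃ (σ : ℤ) (w y : Fin 3 → ℤ), σ • v + d • v ⨯₃ w + d ^ 2 • y = x := by
  obtain ⟨β, hβ⟩ := hv.exists_dotProduct_eq_one
  obtain ⟨⟨s, hs⟩, k, hk⟩ := hx
  obtain ⟨m, hm⟩ := hvv
  set σ := x ⬝ᵥ β
  set u := k ⨯₃ β
  have hx : x = σ • v + d • u := by
    have := cross_cross_eq_smul_sub_smul v x β
    rw [hk, map_smul, LinearMap.smul_apply, dotProduct_comm v β, hβ, one_smul] at this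
    linear_combination (norm := module) -this
  have hvu : v ⬝ᵥ u = d * (s - σ * m) := by
    apply mul_left_cancel₀ hd
    have := congrArg (v ⬝ᵥ ·) hx
    simp only [dotProduct_add, dotProduct_smul, smul_eq_mul] at this
    linear_combination -this + hs - σ * hm
  refine ⟨σ, u ⨯₃ β, (s - σ * m) • β, ?_⟩
  have := cross_cross_eq_smul_sub_smul' v u β
  rw [dotProduct_comm v β, hβ, one_smul, dotProduct_comm u v, hvu] at this
  linear_combination (norm := module) d • this - hx

namespace IsCubicFrame

variable {a b c v : Fin 3 → ℤ} {d : ℤ}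

theorem closure_subset_cubicSublatticeThrough (h : IsCubicFrame a b c d) (hd : d ≠ 0)
    (hv : v ∈ AddSubgroup.closure {a, b, c}) :
    (AddSubgroup.closure {a, b, c} : Set (Fin 3 → ℤ)) ⊆ cubicSublatticeThrough v d := by
  obtain ⟨p, rfl⟩ := mem_closure_triple_iff.1 hv
  rintro x hx
  obtain ⟨q, rfl⟩ := mem_closure_triple_iff.1 hx
  obtain ⟨ε, -, hbc, hca, hab⟩ := h.exists_cross_eq hd
  exact ⟨⟨p ⬝ᵥ q, h.vecMul_dotProduct_vecMul p q⟩, ε • ((p ⨯₃ q) ᵥ* ![a, b, c]),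
    by rw [vecMul_cross_vecMul hbc hca hab, mul_comm, mul_smul]⟩

theorem smul_add_cross_add_mem_closure (h : IsCubicFrame a b c d) (hd : d ≠ 0)
    (hv : v ∈ AddSubgroup.closure {a, b, c}) (σ : ℤ) (w y : Fin 3 → ℤ) :
    σ • v + d • v ⨯₃ w + d ^ 2 • y ∈ AddSubgroup.closure {a, b, c} := by
  have mem (p) : p ᵥ* ![a, b, c] ∈ AddSubgroup.closure {a, b, c} :=
    mem_closure_triple_iff.2 ⟨p, rfl⟩
  obtain ⟨p, rfl⟩ := mem_closure_triple_iff.1 hv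
  obtain ⟨ε, -, hbc, hca, hab⟩ := h.exists_cross_eq hd
  have hw : d ^ 2 • w = ![w ⬝ᵥ a, w ⬝ᵥ b, w ⬝ᵥ c] ᵥ* ![a, b, c] := by
    simp [h.sq_smul_eq_sum hd, vecMul_vec3]
  have hy : d ^ 2 • y = ![y ⬝ᵥ a, y ⬝ᵥ b, y ⬝ᵥ c] ᵥ* ![a, b, c] := by
    simp [h.sq_smul_eq_sum hd, vecMul_vec3]
  have hcross : d • (p ᵥ* ![a, b, c]) ⨯₃ w =
      ε • ((p ⨯₃ ![w ⬝ᵥ a, w ⬝ᵥ b, w ⬝ᵥ c]) ᵥ* ![a, b, c]) := by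
    refine smul_right_injective _ hd ?_
    dsimp only
    rw [smul_smul, ← sq, ← map_smul, hw, vecMul_cross_vecMul hbc hca hab, smul_smul, mul_comm]
  rw [hcross, hy]
  exact add_mem (add_mem (zsmul_mem (mem p) σ) (zsmul_mem (mem _) ε)) (mem _)

end IsCubicFrame

theorem IsCubicLattice.coe_eq_cubicSublatticeThrough {Γ : AddSubgroup (Fin 3 → ℤ)} {d : ℕ}
    (hΓ : IsCubicLattice Γ d) (hd : 0 < d) {v : Fin 3 → ℤ} (hv : Primitive v)
    (hvv : (d : ℤ) ^ 2 ∣ v ⬝ᵥ v) (hvΓ : v ∈ Γ) :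
    (Γ : Set (Fin 3 → ℤ)) = cubicSublatticeThrough v d := by
  obtain ⟨a, b, c, rfl, hab, hac, hbc, haa, hbb, hcc⟩ := hΓ
  simp only [dot3_eq_dotProduct] at hab hac hbc haa hbb hcc
  have h : IsCubicFrame a b c (d : ℤ) :=
    ⟨hab, hbc, by rwa [dotProduct_comm], haa, hbb, hcc⟩
  have hd' : (d : ℤ) ≠ 0 := by exact_mod_cast hd.ne'
  refine (h.closure_subset_cubicSublatticeThrough hd' hvΓ).antisymm fun x hx => ?_
  obtain ⟨σ, w, y, rfl⟩ := exists_eq_smul_add_cross_add hv hd' hvv hx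
  exact h.smul_add_cross_add_mem_closure hd' hvΓ σ w y

/-- Uniqueness part of the main theorem: for primitive `v` with `d² ∣ ‖v‖²`,
any two cubic sublattices of edge length `d` containing `v` coincide. -/
theorem cubic_sublattice_unique (v : Fin 3 → ℤ) (hv : Primitive v) (d : ℕ)
    (hd : 0 < d) (hdvd : (d : ℤ)^2 ∣ dot3 v v)
    (Γ₁ Γ₂ : AddSubgroup (Fin 3 → ℤ))
    (h₁ : IsCubicLattice Γ₁ d) (h₂ : IsCubicLattice Γ₂ d)
    (hv₁ : v ∈ Γ₁) (hv₂ : v ∈ Γ₂) :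
    Γ₁ = Γ₂ := by
  rw [dot3_eq_dotProduct] at hdvd
  exact SetLike.coe_injective <|
    (h₁.coe_eq_cubicSublatticeThrough hd hv hdvd hv₁).trans
      (h₂.coe_eq_cubicSublatticeThrough hd hv hdvd hv₂).symm
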